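/- arXiv:2512.03664 — 2 statements merged into one kernel-verified Lean document; each statement's English description precedes it below -/
import Mathlib

section
/- Player P1 has a winning strategy in the strong Ramsey game R(K_{ℵ0}, K̂_{2,2}) (note that K̂_{2,2} is the complete graph K_4 minus one edge). -/
open SimpleGraph

/-- `hatK t` is the graph `K̂_{2,t}` on `Fin (t+2)`: the complete bipartite graph
`K_{2,t}` together with the edge joining the two vertices of the partition class
of size 2.  The vertices `0` and `1` are the main vertices (adjacent to all
other vertices and to each other); the remaining `t` vertices are adjacent
exactly to `0` and `1`. -/
def hatK (t : ℕ) : SimpleGraph (Fin (t + 2)) :=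
  SimpleGraph.fromRel (fun u _ => u = 0 ∨ u = 1)

/-- The set of edges `E` (edges of the board `K_{ℵ₀}` on vertex set `ℕ`)
contains a copy of the graph `G`. -/
def ContainsCopyIn {α : Type} (G : SimpleGraph α) (E : Finset (Sym2 ℕ)) : Prop :=
  ∃ φ : α → ℕ, Function.Injective φ ∧ ∀ u v : α, G.Adj u v → s(φ u, φ v) ∈ E

/-- Starting from the set `A` of already claimed edges, the set of edges claimed
by the player moving at steps of parity `p` (`p = 0` for the player moving
first) after the first `n` moves of the play `f` have been made. -/
def claimedBy (A : Finset (Sym2 ℕ)) (f : ℕ → Sym2 ℕ) (p n : ℕ) : Finset (Sym2 ℕ) :=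
  A ∪ (Finset.image f ((Finset.range n).filter (fun i => i % 2 = p)))

/-- The move `e` is legal in a position where the two players have claimed the
edge sets `P` and `Q`: it is a genuine edge of the board (not a loop) and is
unclaimed by both players. -/
def LegalMove (e : Sym2 ℕ) (P Q : Finset (Sym2 ℕ)) : Prop :=
  ¬ e.IsDiag ∧ e ∉ P ∧ e ∉ Q

/-- `P1WinsFrom G A B` : in the strong Ramsey game on the board `K_{ℵ₀}` (on
vertex set `ℕ`) with target graph `G`, from the position in which P1 has
claimed the edges `A` and P2 the edges `B` and it is P1's turn (P1 makes the
moves of even index of the play `f`, P2 the moves of odd index), P1 has a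
winning strategy: a strategy `σ` (a function of the history of the play) such
that against every sequence of legal moves by P2, all moves recommended by `σ`
are legal, and at some point P1's claimed edges contain a copy of `G` while
P2's claimed edges still do not. -/
def P1WinsFrom {α : Type} (G : SimpleGraph α) (A B : Finset (Sym2 ℕ)) : Prop :=
  ∃ σ : List (Sym2 ℕ) → Sym2 ℕ,
    ∀ f : ℕ → Sym2 ℕ,
      (∀ n, n % 2 = 0 → f n = σ (List.ofFn fun i : Fin n => f i.1)) →
      (∀ n, n % 2 = 1 → LegalMove (f n) (claimedBy A f 0 n) (claimedBy B f 1 n)) →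
      (∀ n, n % 2 = 0 → LegalMove (f n) (claimedBy A f 0 n) (claimedBy B f 1 n)) ∧
        ∃ n, ContainsCopyIn G (claimedBy A f 0 n) ∧ ¬ ContainsCopyIn G (claimedBy B f 1 n)

/-! ### Auxiliary definitions for P1's strategy -/

/-- largest endpoint of an edge -/
def vmax (e : Sym2 ℕ) : ℕ := Sym2.lift ⟨fun x y => max x y, fun _ _ => max_comm _ _⟩ e

@[simp] lemma vmax_mk (x y : ℕ) : vmax s(x,y) = max x y := rfl

lemma le_vmax {e : Sym2 ℕ} {y : ℕ} (h : y ∈ e) : y ≤ vmax e := by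
  induction e using Sym2.ind with
  | _ a b =>
    rw [Sym2.mem_iff] at h
    rcases h with rfl | rfl <;> simp

def lmax (l : List (Sym2 ℕ)) : ℕ := (l.map vmax).foldr max 0

lemma vmax_le_lmax {e : Sym2 ℕ} {l : List (Sym2 ℕ)} (h : e ∈ l) : vmax e ≤ lmax l := by
  induction l with
  | nil => simp at h
  | cons a t ih =>
    rcases List.mem_cons.1 h with rfl | h
    · simp [lmax]
    · refine le_trans (ih h) ?_
      simp only [lmax, List.map_cons, List.foldr_cons]
      exact le_max_right _ _

/-- a vertex not appearing in any edge of the history `l` -/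
def fresh (l : List (Sym2 ℕ)) : ℕ := lmax l + 1

lemma lt_fresh {e : Sym2 ℕ} {l : List (Sym2 ℕ)} (he : e ∈ l) {y : ℕ} (hy : y ∈ e) :
    y < fresh l := lt_of_le_of_lt (le_trans (le_vmax hy) (vmax_le_lmax he)) (Nat.lt_succ_self _)

lemma ne_of_big_r {e : Sym2 ℕ} {β : ℕ} (h : ∀ y ∈ e, y < β) (α : ℕ) : e ≠ s(α, β) := by
  intro he
  exact absurd (h β (by rw [he]; exact Sym2.mem_mk_right α β)) (lt_irrefl β)

lemma ne_of_big_l {e : Sym2 ℕ} {β : ℕ} (h : ∀ y ∈ e, y < β) (α : ℕ) : e ≠ s(β, α) := by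
  intro he
  exact absurd (h β (by rw [he]; exact Sym2.mem_mk_left β α)) (lt_irrefl β)

def vOf (e : Sym2 ℕ) : ℕ := if (1:ℕ) ∈ e then 1 else 0

/-- P1's strategy for the strong Ramsey game with target `K̂_{2,2}`. -/
def strat (l : List (Sym2 ℕ)) : Sym2 ℕ :=
  let e2 := l.getD 3 s(0,0)
  let e3 := l.getD 5 s(0,0)
  let e4 := l.getD 7 s(0,0)
  let e5 := l.getD 9 s(0,0)
  let v : ℕ := vOf (l.getD 1 s(0,0))
  let u : ℕ := 1 - v
  let c := fresh (l.take 2)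
  let d := fresh (l.take 4)
  let w := fresh (l.take 8)
  let N := fresh l
  if l.length = 0 then s(0,1)
  else if l.length = 2 then s(v, N)
  else if l.length = 4 then (if e2 = s(u,c) then s(v,N) else s(u,c))
  else if l.length = 6 then (if e2 = s(u,c) then (if e3 = s(u,d) then s(c,d) else s(u,d)) else s(v,N))
  else if l.length = 8 then
    (if e2 = s(u,c) then
      (if e3 = s(u,d) ∨ e3 = s(c,d) then s(v,N)
       else if e4 = s(c,d) then s(v,N) else s(c,d))
     else (if e4 = s(u, fresh (l.take 6)) then s(c, fresh (l.take 6)) else s(u, fresh (l.take 6))))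
  else if l.length = 10 then
    (if e2 = s(u,c) then
      (if e3 = s(u,d) then (if e5 = s(w,c) then s(w,d) else s(w,c))
       else if (e3 = s(c,d) ∨ e4 = s(c,d)) then (if e5 = s(w,u) then s(w,d) else s(w,u))
       else s(N, N+1))
     else s(N, N+1))
  else s(N, N+1)

lemma strat0_eval : strat [] = s(0,1) := rfl

lemma strat2_eval (a0 a1 : Sym2 ℕ) : strat [a0,a1] = s(vOf a1, fresh [a0,a1]) := rfl

lemma strat4_eval (a0 a1 a2 a3 : Sym2 ℕ) :
    strat [a0,a1,a2,a3] =
      if a3 = s(1 - vOf a1, fresh [a0,a1]) then s(vOf a1, fresh [a0,a1,a2,a3])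
      else s(1 - vOf a1, fresh [a0,a1]) := rfl

lemma strat6_eval (a0 a1 a2 a3 a4 a5 : Sym2 ℕ) :
    strat [a0,a1,a2,a3,a4,a5] =
      if a3 = s(1 - vOf a1, fresh [a0,a1]) then
        (if a5 = s(1 - vOf a1, fresh [a0,a1,a2,a3]) then s(fresh [a0,a1], fresh [a0,a1,a2,a3])
         else s(1 - vOf a1, fresh [a0,a1,a2,a3]))
      else s(vOf a1, fresh [a0,a1,a2,a3,a4,a5]) := rfl

lemma strat8_eval (a0 a1 a2 a3 a4 a5 a6 a7 : Sym2 ℕ) :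
    strat [a0,a1,a2,a3,a4,a5,a6,a7] =
      if a3 = s(1 - vOf a1, fresh [a0,a1]) then
        (if a5 = s(1 - vOf a1, fresh [a0,a1,a2,a3]) ∨ a5 = s(fresh [a0,a1], fresh [a0,a1,a2,a3])
         then s(vOf a1, fresh [a0,a1,a2,a3,a4,a5,a6,a7])
         else if a7 = s(fresh [a0,a1], fresh [a0,a1,a2,a3])
           then s(vOf a1, fresh [a0,a1,a2,a3,a4,a5,a6,a7])
           else s(fresh [a0,a1], fresh [a0,a1,a2,a3]))
      else (if a7 = s(1 - vOf a1, fresh [a0,a1,a2,a3,a4,a5])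
        then s(fresh [a0,a1], fresh [a0,a1,a2,a3,a4,a5])
        else s(1 - vOf a1, fresh [a0,a1,a2,a3,a4,a5])) := rfl

lemma strat10_eval (a0 a1 a2 a3 a4 a5 a6 a7 a8 a9 : Sym2 ℕ) :
    strat [a0,a1,a2,a3,a4,a5,a6,a7,a8,a9] =
      if a3 = s(1 - vOf a1, fresh [a0,a1]) then
        (if a5 = s(1 - vOf a1, fresh [a0,a1,a2,a3]) then
           (if a9 = s(fresh [a0,a1,a2,a3,a4,a5,a6,a7], fresh [a0,a1])
            then s(fresh [a0,a1,a2,a3,a4,a5,a6,a7], fresh [a0,a1,a2,a3])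
            else s(fresh [a0,a1,a2,a3,a4,a5,a6,a7], fresh [a0,a1]))
         else if (a5 = s(fresh [a0,a1], fresh [a0,a1,a2,a3]) ∨ a7 = s(fresh [a0,a1], fresh [a0,a1,a2,a3])) then
           (if a9 = s(fresh [a0,a1,a2,a3,a4,a5,a6,a7], 1 - vOf a1)
            then s(fresh [a0,a1,a2,a3,a4,a5,a6,a7], fresh [a0,a1,a2,a3])
            else s(fresh [a0,a1,a2,a3,a4,a5,a6,a7], 1 - vOf a1))
         else s(fresh [a0,a1,a2,a3,a4,a5,a6,a7,a8,a9], fresh [a0,a1,a2,a3,a4,a5,a6,a7,a8,a9] + 1))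
      else s(fresh [a0,a1,a2,a3,a4,a5,a6,a7,a8,a9], fresh [a0,a1,a2,a3,a4,a5,a6,a7,a8,a9] + 1) := rfl

/-- exhibiting a copy of `hatK 2` -/
lemma copy_of {E : Finset (Sym2 ℕ)} {x0 x1 x2 x3 : ℕ}
    (h01 : x0 ≠ x1) (h02 : x0 ≠ x2) (h03 : x0 ≠ x3)
    (h12 : x1 ≠ x2) (h13 : x1 ≠ x3) (h23 : x2 ≠ x3)
    (e01 : s(x0,x1) ∈ E) (e02 : s(x0,x2) ∈ E) (e03 : s(x0,x3) ∈ E)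
    (e12 : s(x1,x2) ∈ E) (e13 : s(x1,x3) ∈ E) : ContainsCopyIn (hatK 2) E := by
  refine ⟨![x0,x1,x2,x3], ?_, ?_⟩
  · intro a b hab
    fin_cases a <;> fin_cases b <;> simp_all
  · intro a b hab
    fin_cases a <;> fin_cases b <;>
      simp only [hatK, fromRel_adj, Matrix.cons_val_zero, Matrix.cons_val_one,
        Matrix.head_cons, Matrix.cons_val_two, Matrix.tail_cons, Matrix.cons_val_three] at hab ⊢ <;>
      first
        | exact absurd hab (by decide)
        | exact e01 | exact e02 | exact e03 | exact e12 | exact e13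
        | exact Sym2.eq_swap ▸ e01 | exact Sym2.eq_swap ▸ e02 | exact Sym2.eq_swap ▸ e03
        | exact Sym2.eq_swap ▸ e12 | exact Sym2.eq_swap ▸ e13

lemma copy_struct {E : Finset (Sym2 ℕ)} (h : ContainsCopyIn (hatK 2) E) :
    ∃ S : Finset ℕ, S.card ≤ 4 ∧ ∃ F : Finset (Sym2 ℕ), F ⊆ E ∧ F.card = 5 ∧
      ∀ g ∈ F, ∀ y ∈ g, y ∈ S := by
  obtain ⟨φ, hinj, hadj⟩ := h
  have adj01 : (hatK 2).Adj 0 1 := by rw [hatK, SimpleGraph.fromRel_adj]; decide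
  have adj02 : (hatK 2).Adj 0 2 := by rw [hatK, SimpleGraph.fromRel_adj]; decide
  have adj03 : (hatK 2).Adj 0 3 := by rw [hatK, SimpleGraph.fromRel_adj]; decide
  have adj12 : (hatK 2).Adj 1 2 := by rw [hatK, SimpleGraph.fromRel_adj]; decide
  have adj13 : (hatK 2).Adj 1 3 := by rw [hatK, SimpleGraph.fromRel_adj]; decide
  have d01 : φ 0 ≠ φ 1 := fun h => absurd (hinj h) (by decide)
  have d02 : φ 0 ≠ φ 2 := fun h => absurd (hinj h) (by decide)
  have d03 : φ 0 ≠ φ 3 := fun h => absurd (hinj h) (by decide)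
  have d12 : φ 1 ≠ φ 2 := fun h => absurd (hinj h) (by decide)
  have d13 : φ 1 ≠ φ 3 := fun h => absurd (hinj h) (by decide)
  have d23 : φ 2 ≠ φ 3 := fun h => absurd (hinj h) (by decide)
  refine ⟨{φ 0, φ 1, φ 2, φ 3}, ?_, {s(φ 0, φ 1), s(φ 0, φ 2), s(φ 0, φ 3), s(φ 1, φ 2), s(φ 1, φ 3)}, ?_, ?_, ?_⟩
  · apply le_trans (Finset.card_insert_le _ _)
    apply Nat.succ_le_succ
    apply le_trans (Finset.card_insert_le _ _)
    apply Nat.succ_le_succ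
    apply le_trans (Finset.card_insert_le _ _)
    simp
  · intro g hg
    simp only [Finset.mem_insert, Finset.mem_singleton] at hg
    rcases hg with rfl | rfl | rfl | rfl | rfl
    · exact hadj 0 1 adj01
    · exact hadj 0 2 adj02
    · exact hadj 0 3 adj03
    · exact hadj 1 2 adj12
    · exact hadj 1 3 adj13
  · rw [Finset.card_insert_of_notMem, Finset.card_insert_of_notMem,
      Finset.card_insert_of_notMem, Finset.card_insert_of_notMem, Finset.card_singleton] <;>
      simp only [Finset.mem_insert, Finset.mem_singleton, Sym2.eq_iff] <;> tauto
  · intro g hg y hy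
    simp only [Finset.mem_insert, Finset.mem_singleton] at hg ⊢
    rcases hg with rfl | rfl | rfl | rfl | rfl <;> rw [Sym2.mem_iff] at hy <;> tauto

lemma noCopy4 {E : Finset (Sym2 ℕ)} (h : E.card ≤ 4) : ¬ ContainsCopyIn (hatK 2) E := by
  intro hc
  obtain ⟨S, _, F, hFE, hF5, _⟩ := copy_struct hc
  have := Finset.card_le_card hFE
  omega

lemma noCopy5 {E : Finset (Sym2 ℕ)} {u c d p : ℕ} {e : Sym2 ℕ}
    (hcard : E.card ≤ 5)
    (he : e ∈ E) (hnd : ¬ e.IsDiag)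
    (huc : s(u,c) ∈ E) (hp : p = u ∨ p = c) (hpd : s(p,d) ∈ E)
    (hue : u ∉ e) (hce : c ∉ e) (hde : d ∉ e)
    (huc' : u ≠ c) (hud : u ≠ d) (hcd : c ≠ d) :
    ¬ ContainsCopyIn (hatK 2) E := by
  intro hcopy
  obtain ⟨S, hS4, F, hFE, hF5, hFS⟩ := copy_struct hcopy
  have hEF : E = F := by
    have := Finset.card_le_card hFE
    exact (Finset.eq_of_subset_of_card_le hFE (by omega)).symm
  have hmem : ∀ g ∈ E, ∀ y ∈ g, y ∈ S := by
    intro g hg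
    exact hFS g (hEF ▸ hg)
  obtain ⟨x, y, rfl⟩ : ∃ x y, e = s(x,y) := by
    induction e using Sym2.ind with
    | _ x y => exact ⟨x, y, rfl⟩
  have hxy : x ≠ y := by rwa [Sym2.mk_isDiag_iff] at hnd
  have hxS : x ∈ S := hmem _ he x (Sym2.mem_mk_left _ _)
  have hyS : y ∈ S := hmem _ he y (Sym2.mem_mk_right _ _)
  have huS : u ∈ S := hmem _ huc u (Sym2.mem_mk_left _ _)
  have hcS : c ∈ S := hmem _ huc c (Sym2.mem_mk_right _ _)
  have hdS : d ∈ S := hmem _ hpd d (Sym2.mem_mk_right _ _)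
  have hux : u ≠ x := fun h => hue (h ▸ Sym2.mem_mk_left _ _)
  have huy : u ≠ y := fun h => hue (h ▸ Sym2.mem_mk_right _ _)
  have hcx : c ≠ x := fun h => hce (h ▸ Sym2.mem_mk_left _ _)
  have hcy : c ≠ y := fun h => hce (h ▸ Sym2.mem_mk_right _ _)
  have hdx : d ≠ x := fun h => hde (h ▸ Sym2.mem_mk_left _ _)
  have hdy : d ≠ y := fun h => hde (h ▸ Sym2.mem_mk_right _ _)
  have hsub : ({u, c, d, x, y} : Finset ℕ) ⊆ S := by
    intro z hz
    simp only [Finset.mem_insert, Finset.mem_singleton] at hz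
    rcases hz with rfl | rfl | rfl | rfl | rfl <;> assumption
  have h5 : ({u, c, d, x, y} : Finset ℕ).card = 5 := by
    rw [Finset.card_insert_of_notMem, Finset.card_insert_of_notMem,
      Finset.card_insert_of_notMem, Finset.card_insert_of_notMem, Finset.card_singleton] <;>
      simp only [Finset.mem_insert, Finset.mem_singleton] <;> tauto
  have := Finset.card_le_card hsub
  omega

/-- P1 has a winning strategy in the strong Ramsey game R(K_{ℵ₀}, K̂_{2,2}). -/
theorem P1_wins_hatK_two_2 : P1WinsFrom (hatK 2) ∅ ∅ := by
  classical
  refine ⟨strat, ?_⟩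
  intro f hσ hleg
  have hcb : ∀ p n (x : Sym2 ℕ), x ∈ claimedBy ∅ f p n ↔ ∃ i, (i < n ∧ i % 2 = p) ∧ f i = x := by
    intro p n x
    simp [claimedBy]
  have hmemcb : ∀ p i n, i < n → i % 2 = p → f i ∈ claimedBy ∅ f p n := by
    intro p i n h1 h2; rw [hcb]; exact ⟨i, ⟨h1, h2⟩, rfl⟩
  have hP2ne : ∀ n, n % 2 = 1 → ∀ i, i < n → f n ≠ f i := by
    intro n hn i hi h
    obtain ⟨-, hP, hQ⟩ := hleg n hn
    rcases Nat.mod_two_eq_zero_or_one i with h2 | h2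
    · exact hP (h ▸ hmemcb 0 i n hi h2)
    · exact hQ (h ▸ hmemcb 1 i n hi h2)
  have hP2nd : ∀ n, n % 2 = 1 → ¬ (f n).IsDiag := fun n hn => (hleg n hn).1
  have legal_of : ∀ n (e : Sym2 ℕ), f n = e → ¬ e.IsDiag → (∀ i, i < n → f i ≠ e) →
      LegalMove (f n) (claimedBy ∅ f 0 n) (claimedBy ∅ f 1 n) := by
    intro n e hfe hnd hne
    rw [hfe]
    refine ⟨hnd, ?_, ?_⟩ <;>
      · intro hmem
        rw [hcb] at hmem
        obtain ⟨i, ⟨hi, -⟩, hfi⟩ := hmem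
        exact hne i hi hfi
  -- explicit prefix lists
  have hL0 : (List.ofFn fun i : Fin 0 => f i.1) = [] := by simp
  have hL2 : (List.ofFn fun i : Fin 2 => f i.1) = [f 0, f 1] := by simp [List.ofFn_succ]
  have hL4 : (List.ofFn fun i : Fin 4 => f i.1) = [f 0, f 1, f 2, f 3] := by simp [List.ofFn_succ]
  have hL6 : (List.ofFn fun i : Fin 6 => f i.1) = [f 0, f 1, f 2, f 3, f 4, f 5] := by
    simp [List.ofFn_succ]
  have hL8 : (List.ofFn fun i : Fin 8 => f i.1) = [f 0, f 1, f 2, f 3, f 4, f 5, f 6, f 7] := by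
    simp [List.ofFn_succ]
  have hL10 : (List.ofFn fun i : Fin 10 => f i.1) =
      [f 0, f 1, f 2, f 3, f 4, f 5, f 6, f 7, f 8, f 9] := by
    simp [List.ofFn_succ]
  have hmemL : ∀ i n, i < n → f i ∈ (List.ofFn fun j : Fin n => f j.1) := by
    intro i n h
    exact List.mem_ofFn.mpr ⟨⟨i, h⟩, rfl⟩
  have hfbL : ∀ n i, i < n → ∀ y, y ∈ f i → y < fresh (List.ofFn fun j : Fin n => f j.1) :=
    fun n i h y hy => lt_fresh (hmemL i n h) hy
  -- filler moves are always legal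
  have hfilLeg : ∀ n, f n = s(fresh (List.ofFn fun j : Fin n => f j.1),
        fresh (List.ofFn fun j : Fin n => f j.1) + 1) →
      LegalMove (f n) (claimedBy ∅ f 0 n) (claimedBy ∅ f 1 n) := by
    intro n hn
    refine legal_of n _ hn ?_ ?_
    · rw [Sym2.mk_isDiag_iff]; omega
    · intro i hi h
      have hb := hfbL n i hi
      have : fresh (List.ofFn fun j : Fin n => f j.1) ∈ f i := by
        rw [h]; exact Sym2.mem_mk_left _ _
      exact absurd (hb _ this) (by omega)
  have hfil : ∀ n, n % 2 = 0 → 12 ≤ n →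
      f n = s(fresh (List.ofFn fun j : Fin n => f j.1),
        fresh (List.ofFn fun j : Fin n => f j.1) + 1) := by
    intro n hn h12
    rw [hσ n hn]
    simp only [strat, List.length_ofFn]
    rw [if_neg (by omega), if_neg (by omega), if_neg (by omega), if_neg (by omega),
      if_neg (by omega), if_neg (by omega)]
  -- move 0
  have h0 : f 0 = s(0,1) := by rw [hσ 0 rfl, hL0, strat0_eval]
  have legal0 : LegalMove (f 0) (claimedBy ∅ f 0 0) (claimedBy ∅ f 1 0) := by
    refine legal_of 0 _ h0 ?_ ?_
    · rw [Sym2.mk_isDiag_iff]; omega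
    · intro i hi; omega
  -- move 2
  have h2' : f 2 = s(vOf (f 1), fresh [f 0, f 1]) := by rw [hσ 2 rfl, hL2, strat2_eval]
  have hu1 : (1 - vOf (f 1)) ∉ f 1 := by
    unfold vOf
    by_cases h1 : (1:ℕ) ∈ f 1
    · rw [if_pos h1]
      intro h0'
      have he : f 1 = s(0,1) := (Sym2.mem_and_mem_iff (by norm_num)).1 ⟨by simpa using h0', h1⟩
      exact hP2ne 1 rfl 0 (by norm_num) (by rw [he, h0])
    · rw [if_neg h1]
      simpa using h1
  have hv01 : vOf (f 1) = 0 ∨ vOf (f 1) = 1 := by unfold vOf; split <;> simp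
  obtain ⟨v, hvof⟩ : ∃ v, vOf (f 1) = v := ⟨_, rfl⟩
  obtain ⟨u, huof⟩ : ∃ u, 1 - v = u := ⟨_, rfl⟩
  obtain ⟨c, hc⟩ : ∃ c, fresh [f 0, f 1] = c := ⟨_, rfl⟩
  rw [hvof, hc] at h2'
  rw [hvof, huof] at hu1
  rw [hvof] at hv01
  have hv1 : v ≤ 1 := by omega
  have huv : u + v = 1 := by omega
  have hb2 : ∀ i, i < 2 → ∀ y, y ∈ f i → y < c := by
    intro i hi y hy
    rw [← hc]
    have := hfbL 2 i hi y hy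
    rwa [hL2] at this
  have hc2 : 2 ≤ c := by
    have h1m : (1:ℕ) ∈ f 0 := by rw [h0]; exact Sym2.mem_mk_right _ _
    have := hb2 0 (by norm_num) 1 h1m
    omega
  have legal2 : LegalMove (f 2) (claimedBy ∅ f 0 2) (claimedBy ∅ f 1 2) := by
    refine legal_of 2 _ h2' ?_ ?_
    · rw [Sym2.mk_isDiag_iff]; omega
    · intro i hi
      interval_cases i
      · rw [h0]; rw [Ne, Sym2.eq_iff]; omega
      · exact ne_of_big_r (hb2 1 (by norm_num)) v
  have hd1 : ¬ (f 1).IsDiag := hP2nd 1 rfl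
  have hce1 : c ∉ f 1 := fun h => absurd (hb2 1 (by norm_num) c h) (by omega)
    -- card bound for P2's edges at time 11
  have hcard11 : (claimedBy ∅ f 1 11).card ≤ 5 := by
    have : claimedBy ∅ f 1 11 =
        Finset.image f ((Finset.range 11).filter (fun i => i % 2 = 1)) := by
      simp [claimedBy]
    rw [this]
    refine le_trans (Finset.card_image_le) (le_of_eq ?_)
    decide
  have hcard9 : (claimedBy ∅ f 1 9).card ≤ 4 := by
    have : claimedBy ∅ f 1 9 =
        Finset.image f ((Finset.range 9).filter (fun i => i % 2 = 1)) := by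
      simp [claimedBy]
    rw [this]
    refine le_trans (Finset.card_image_le) (le_of_eq ?_)
    decide
  -- move 4 : case split
  have h4' := hσ 4 rfl
  rw [hL4, strat4_eval, hvof, huof, hc] at h4'
  by_cases hBA : f 3 = s(u, c)
  · -- ===================== CASE B =====================
    rw [if_pos hBA] at h4'
    obtain ⟨d, hd⟩ : ∃ d, fresh [f 0, f 1, f 2, f 3] = d := ⟨_, rfl⟩
    rw [hd] at h4'
    have hb4 : ∀ i, i < 4 → ∀ y, y ∈ f i → y < d := by
      intro i hi y hy
      rw [← hd]
      have := hfbL 4 i hi y hy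
      rwa [hL4] at this
    have hcd : c < d := by
      have : c ∈ f 2 := by rw [h2']; exact Sym2.mem_mk_right _ _
      exact hb4 2 (by norm_num) c this
    have hde1 : d ∉ f 1 := fun h => absurd (hb4 1 (by norm_num) d h) (by omega)
    have legal4 : LegalMove (f 4) (claimedBy ∅ f 0 4) (claimedBy ∅ f 1 4) := by
      refine legal_of 4 _ h4' ?_ ?_
      · rw [Sym2.mk_isDiag_iff]; omega
      · intro i hi
        interval_cases i
        · rw [h0]; rw [Ne, Sym2.eq_iff]; omega
        · exact ne_of_big_r (hb4 1 (by norm_num)) v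
        · rw [h2']; rw [Ne, Sym2.eq_iff]; omega
        · exact ne_of_big_r (hb4 3 (by norm_num)) v
    have h6' := hσ 6 rfl
    rw [hL6, strat6_eval, hvof, huof, hc, hd, if_pos hBA] at h6'
    have h8' := hσ 8 rfl
    rw [hL8, strat8_eval, hvof, huof, hc, hd, if_pos hBA] at h8'
    have h10' := hσ 10 rfl
    rw [hL10, strat10_eval, hvof, huof, hc, hd, if_pos hBA] at h10'
    obtain ⟨w, hw⟩ : ∃ w, fresh [f 0, f 1, f 2, f 3, f 4, f 5, f 6, f 7] = w := ⟨_, rfl⟩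
    rw [hw] at h8' h10'
    have hb8 : ∀ i, i < 8 → ∀ y, y ∈ f i → y < w := by
      intro i hi y hy
      rw [← hw]
      have := hfbL 8 i hi y hy
      rwa [hL8] at this
    have hdw : d < w := by
      have : d ∈ f 4 := by rw [h4']; exact Sym2.mem_mk_right _ _
      exact hb8 4 (by norm_num) d this
    by_cases hB21 : f 5 = s(u, d)
    · -- B2-1 : P2 claimed ud; P1 takes cd, builds triangle v c d plus pendant vw.
      rw [if_pos hB21] at h6'
      rw [if_pos (Or.inl hB21)] at h8'
      rw [if_pos hB21] at h10'
      have legal6 : LegalMove (f 6) (claimedBy ∅ f 0 6) (claimedBy ∅ f 1 6) := by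
        refine legal_of 6 _ h6' ?_ ?_
        · rw [Sym2.mk_isDiag_iff]; omega
        · intro i hi
          interval_cases i
          · rw [h0]; rw [Ne, Sym2.eq_iff]; omega
          · exact ne_of_big_r (hb4 1 (by norm_num)) c
          · rw [h2']; rw [Ne, Sym2.eq_iff]; omega
          · rw [hBA]; rw [Ne, Sym2.eq_iff]; omega
          · rw [h4']; rw [Ne, Sym2.eq_iff]; omega
          · rw [hB21]; rw [Ne, Sym2.eq_iff]; omega
      have legal8 : LegalMove (f 8) (claimedBy ∅ f 0 8) (claimedBy ∅ f 1 8) := by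
        refine legal_of 8 _ h8' ?_ ?_
        · rw [Sym2.mk_isDiag_iff]; omega
        · intro i hi
          interval_cases i
          · rw [h0]; rw [Ne, Sym2.eq_iff]; omega
          · exact ne_of_big_r (hb8 1 (by norm_num)) v
          · rw [h2']; rw [Ne, Sym2.eq_iff]; omega
          · exact ne_of_big_r (hb8 3 (by norm_num)) v
          · rw [h4']; rw [Ne, Sym2.eq_iff]; omega
          · exact ne_of_big_r (hb8 5 (by norm_num)) v
          · rw [h6']; rw [Ne, Sym2.eq_iff]; omega
          · exact ne_of_big_r (hb8 7 (by norm_num)) v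
      have hnoc : ¬ ContainsCopyIn (hatK 2) (claimedBy ∅ f 1 11) := by
        refine noCopy5 hcard11 (hmemcb 1 1 11 (by norm_num) rfl) hd1
          (by rw [← hBA]; exact hmemcb 1 3 11 (by norm_num) rfl) (Or.inl rfl)
          (by rw [← hB21]; exact hmemcb 1 5 11 (by norm_num) rfl)
          hu1 hce1 hde1 (by omega) (by omega) (by omega)
      by_cases h9 : f 9 = s(w, c)
      · rw [if_pos h9] at h10'
        have legal10 : LegalMove (f 10) (claimedBy ∅ f 0 10) (claimedBy ∅ f 1 10) := by
          refine legal_of 10 _ h10' ?_ ?_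
          · rw [Sym2.mk_isDiag_iff]; omega
          · intro i hi
            interval_cases i
            · rw [h0]; rw [Ne, Sym2.eq_iff]; omega
            · exact ne_of_big_l (hb8 1 (by norm_num)) d
            · rw [h2']; rw [Ne, Sym2.eq_iff]; omega
            · exact ne_of_big_l (hb8 3 (by norm_num)) d
            · rw [h4']; rw [Ne, Sym2.eq_iff]; omega
            · exact ne_of_big_l (hb8 5 (by norm_num)) d
            · rw [h6']; rw [Ne, Sym2.eq_iff]; omega
            · exact ne_of_big_l (hb8 7 (by norm_num)) d
            · rw [h8']; rw [Ne, Sym2.eq_iff]; omega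
            · rw [h9]; rw [Ne, Sym2.eq_iff]; omega
        refine ⟨?_, 11, ?_, hnoc⟩
        · intro n hn
          have hsplit : n = 0 ∨ n = 2 ∨ n = 4 ∨ n = 6 ∨ n = 8 ∨ n = 10 ∨ 12 ≤ n := by omega
          rcases hsplit with rfl | rfl | rfl | rfl | rfl | rfl | h12
          · exact legal0
          · exact legal2
          · exact legal4
          · exact legal6
          · exact legal8
          · exact legal10
          · exact hfilLeg n (hfil n hn h12)
        · -- copy on {v, d, c, w} : edges vd, vc, vw, dc, dw
          refine copy_of (x0 := v) (x1 := d) (x2 := c) (x3 := w)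
            (by omega) (by omega) (by omega) (by omega) (by omega) (by omega)
            ?_ ?_ ?_ ?_ ?_
          · rw [← h4']; exact hmemcb 0 4 11 (by norm_num) rfl
          · rw [← h2']; exact hmemcb 0 2 11 (by norm_num) rfl
          · rw [← h8']; exact hmemcb 0 8 11 (by norm_num) rfl
          · have : s(d, c) = f 6 := by rw [h6']; exact Sym2.eq_swap
            rw [this]; exact hmemcb 0 6 11 (by norm_num) rfl
          · have : s(d, w) = f 10 := by rw [h10']; exact Sym2.eq_swap
            rw [this]; exact hmemcb 0 10 11 (by norm_num) rfl
      · rw [if_neg h9] at h10'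
        have legal10 : LegalMove (f 10) (claimedBy ∅ f 0 10) (claimedBy ∅ f 1 10) := by
          refine legal_of 10 _ h10' ?_ ?_
          · rw [Sym2.mk_isDiag_iff]; omega
          · intro i hi
            interval_cases i
            · rw [h0]; rw [Ne, Sym2.eq_iff]; omega
            · exact ne_of_big_l (hb8 1 (by norm_num)) c
            · rw [h2']; rw [Ne, Sym2.eq_iff]; omega
            · exact ne_of_big_l (hb8 3 (by norm_num)) c
            · rw [h4']; rw [Ne, Sym2.eq_iff]; omega
            · exact ne_of_big_l (hb8 5 (by norm_num)) c
            · rw [h6']; rw [Ne, Sym2.eq_iff]; omega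
            · exact ne_of_big_l (hb8 7 (by norm_num)) c
            · rw [h8']; rw [Ne, Sym2.eq_iff]; omega
            · exact h9
        refine ⟨?_, 11, ?_, hnoc⟩
        · intro n hn
          have hsplit : n = 0 ∨ n = 2 ∨ n = 4 ∨ n = 6 ∨ n = 8 ∨ n = 10 ∨ 12 ≤ n := by omega
          rcases hsplit with rfl | rfl | rfl | rfl | rfl | rfl | h12
          · exact legal0
          · exact legal2
          · exact legal4
          · exact legal6
          · exact legal8
          · exact legal10
          · exact hfilLeg n (hfil n hn h12)
        · -- copy on {v, c, d, w} : edges vc, vd, vw, cd, cw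
          refine copy_of (x0 := v) (x1 := c) (x2 := d) (x3 := w)
            (by omega) (by omega) (by omega) (by omega) (by omega) (by omega)
            ?_ ?_ ?_ ?_ ?_
          · rw [← h2']; exact hmemcb 0 2 11 (by norm_num) rfl
          · rw [← h4']; exact hmemcb 0 4 11 (by norm_num) rfl
          · rw [← h8']; exact hmemcb 0 8 11 (by norm_num) rfl
          · rw [← h6']; exact hmemcb 0 6 11 (by norm_num) rfl
          · have : s(c, w) = f 10 := by rw [h10']; exact Sym2.eq_swap
            rw [this]; exact hmemcb 0 10 11 (by norm_num) rfl
    · by_cases hB22 : f 5 = s(c, d)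
      · -- B2-2 : P2 claimed cd; P1 takes ud, triangle u v d, pendant vw.
        rw [if_neg hB21] at h6'
        rw [if_pos (Or.inr hB22)] at h8'
        rw [if_neg hB21, if_pos (Or.inl hB22)] at h10'
        have legal6 : LegalMove (f 6) (claimedBy ∅ f 0 6) (claimedBy ∅ f 1 6) := by
          refine legal_of 6 _ h6' ?_ ?_
          · rw [Sym2.mk_isDiag_iff]; omega
          · intro i hi
            interval_cases i
            · rw [h0]; rw [Ne, Sym2.eq_iff]; omega
            · exact ne_of_big_r (hb4 1 (by norm_num)) u
            · rw [h2']; rw [Ne, Sym2.eq_iff]; omega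
            · rw [hBA]; rw [Ne, Sym2.eq_iff]; omega
            · rw [h4']; rw [Ne, Sym2.eq_iff]; omega
            · exact hB21
        have legal8 : LegalMove (f 8) (claimedBy ∅ f 0 8) (claimedBy ∅ f 1 8) := by
          refine legal_of 8 _ h8' ?_ ?_
          · rw [Sym2.mk_isDiag_iff]; omega
          · intro i hi
            interval_cases i
            · rw [h0]; rw [Ne, Sym2.eq_iff]; omega
            · exact ne_of_big_r (hb8 1 (by norm_num)) v
            · rw [h2']; rw [Ne, Sym2.eq_iff]; omega
            · exact ne_of_big_r (hb8 3 (by norm_num)) v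
            · rw [h4']; rw [Ne, Sym2.eq_iff]; omega
            · exact ne_of_big_r (hb8 5 (by norm_num)) v
            · rw [h6']; rw [Ne, Sym2.eq_iff]; omega
            · exact ne_of_big_r (hb8 7 (by norm_num)) v
        have hnoc : ¬ ContainsCopyIn (hatK 2) (claimedBy ∅ f 1 11) := by
          refine noCopy5 hcard11 (hmemcb 1 1 11 (by norm_num) rfl) hd1
            (by rw [← hBA]; exact hmemcb 1 3 11 (by norm_num) rfl) (Or.inr rfl)
            (by rw [← hB22]; exact hmemcb 1 5 11 (by norm_num) rfl)
            hu1 hce1 hde1 (by omega) (by omega) (by omega)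
        have hvuf0 : s(v, u) = f 0 := by rw [h0, Sym2.eq_iff]; omega
        by_cases h9 : f 9 = s(w, u)
        · rw [if_pos h9] at h10'
          have legal10 : LegalMove (f 10) (claimedBy ∅ f 0 10) (claimedBy ∅ f 1 10) := by
            refine legal_of 10 _ h10' ?_ ?_
            · rw [Sym2.mk_isDiag_iff]; omega
            · intro i hi
              interval_cases i
              · rw [h0]; rw [Ne, Sym2.eq_iff]; omega
              · exact ne_of_big_l (hb8 1 (by norm_num)) d
              · rw [h2']; rw [Ne, Sym2.eq_iff]; omega
              · exact ne_of_big_l (hb8 3 (by norm_num)) d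
              · rw [h4']; rw [Ne, Sym2.eq_iff]; omega
              · exact ne_of_big_l (hb8 5 (by norm_num)) d
              · rw [h6']; rw [Ne, Sym2.eq_iff]; omega
              · exact ne_of_big_l (hb8 7 (by norm_num)) d
              · rw [h8']; rw [Ne, Sym2.eq_iff]; omega
              · rw [h9]; rw [Ne, Sym2.eq_iff]; omega
          refine ⟨?_, 11, ?_, hnoc⟩
          · intro n hn
            have hsplit : n = 0 ∨ n = 2 ∨ n = 4 ∨ n = 6 ∨ n = 8 ∨ n = 10 ∨ 12 ≤ n := by omega
            rcases hsplit with rfl | rfl | rfl | rfl | rfl | rfl | h12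
            · exact legal0
            · exact legal2
            · exact legal4
            · exact legal6
            · exact legal8
            · exact legal10
            · exact hfilLeg n (hfil n hn h12)
          · refine copy_of (x0 := v) (x1 := d) (x2 := u) (x3 := w)
              (by omega) (by omega) (by omega) (by omega) (by omega) (by omega)
              ?_ ?_ ?_ ?_ ?_
            · rw [← h4']; exact hmemcb 0 4 11 (by norm_num) rfl
            · rw [hvuf0]; exact hmemcb 0 0 11 (by norm_num) rfl
            · rw [← h8']; exact hmemcb 0 8 11 (by norm_num) rfl
            · have : s(d, u) = f 6 := by rw [h6']; exact Sym2.eq_swap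
              rw [this]; exact hmemcb 0 6 11 (by norm_num) rfl
            · have : s(d, w) = f 10 := by rw [h10']; exact Sym2.eq_swap
              rw [this]; exact hmemcb 0 10 11 (by norm_num) rfl
        · rw [if_neg h9] at h10'
          have legal10 : LegalMove (f 10) (claimedBy ∅ f 0 10) (claimedBy ∅ f 1 10) := by
            refine legal_of 10 _ h10' ?_ ?_
            · rw [Sym2.mk_isDiag_iff]; omega
            · intro i hi
              interval_cases i
              · rw [h0]; rw [Ne, Sym2.eq_iff]; omega
              · exact ne_of_big_l (hb8 1 (by norm_num)) u
              · rw [h2']; rw [Ne, Sym2.eq_iff]; omega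
              · exact ne_of_big_l (hb8 3 (by norm_num)) u
              · rw [h4']; rw [Ne, Sym2.eq_iff]; omega
              · exact ne_of_big_l (hb8 5 (by norm_num)) u
              · rw [h6']; rw [Ne, Sym2.eq_iff]; omega
              · exact ne_of_big_l (hb8 7 (by norm_num)) u
              · rw [h8']; rw [Ne, Sym2.eq_iff]; omega
              · exact h9
          refine ⟨?_, 11, ?_, hnoc⟩
          · intro n hn
            have hsplit : n = 0 ∨ n = 2 ∨ n = 4 ∨ n = 6 ∨ n = 8 ∨ n = 10 ∨ 12 ≤ n := by omega
            rcases hsplit with rfl | rfl | rfl | rfl | rfl | rfl | h12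
            · exact legal0
            · exact legal2
            · exact legal4
            · exact legal6
            · exact legal8
            · exact legal10
            · exact hfilLeg n (hfil n hn h12)
          · refine copy_of (x0 := v) (x1 := u) (x2 := d) (x3 := w)
              (by omega) (by omega) (by omega) (by omega) (by omega) (by omega)
              ?_ ?_ ?_ ?_ ?_
            · rw [hvuf0]; exact hmemcb 0 0 11 (by norm_num) rfl
            · rw [← h4']; exact hmemcb 0 4 11 (by norm_num) rfl
            · rw [← h8']; exact hmemcb 0 8 11 (by norm_num) rfl
            · rw [← h6']; exact hmemcb 0 6 11 (by norm_num) rfl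
            · have : s(u, w) = f 10 := by rw [h10']; exact Sym2.eq_swap
              rw [this]; exact hmemcb 0 10 11 (by norm_num) rfl
      · -- B1 : P2 did not touch {ud, cd}; P1 takes ud threatening cd.
        rw [if_neg hB21] at h6'
        rw [if_neg (by tauto)] at h8'
        by_cases hB13 : f 7 = s(c, d)
        · rw [if_pos hB13] at h8'
          rw [if_neg hB21, if_pos (Or.inr hB13)] at h10'
          have legal6 : LegalMove (f 6) (claimedBy ∅ f 0 6) (claimedBy ∅ f 1 6) := by
            refine legal_of 6 _ h6' ?_ ?_
            · rw [Sym2.mk_isDiag_iff]; omega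
            · intro i hi
              interval_cases i
              · rw [h0]; rw [Ne, Sym2.eq_iff]; omega
              · exact ne_of_big_r (hb4 1 (by norm_num)) u
              · rw [h2']; rw [Ne, Sym2.eq_iff]; omega
              · rw [hBA]; rw [Ne, Sym2.eq_iff]; omega
              · rw [h4']; rw [Ne, Sym2.eq_iff]; omega
              · exact hB21
          have legal8 : LegalMove (f 8) (claimedBy ∅ f 0 8) (claimedBy ∅ f 1 8) := by
            refine legal_of 8 _ h8' ?_ ?_
            · rw [Sym2.mk_isDiag_iff]; omega
            · intro i hi
              interval_cases i
              · rw [h0]; rw [Ne, Sym2.eq_iff]; omega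
              · exact ne_of_big_r (hb8 1 (by norm_num)) v
              · rw [h2']; rw [Ne, Sym2.eq_iff]; omega
              · exact ne_of_big_r (hb8 3 (by norm_num)) v
              · rw [h4']; rw [Ne, Sym2.eq_iff]; omega
              · exact ne_of_big_r (hb8 5 (by norm_num)) v
              · rw [h6']; rw [Ne, Sym2.eq_iff]; omega
              · exact ne_of_big_r (hb8 7 (by norm_num)) v
          have hnoc : ¬ ContainsCopyIn (hatK 2) (claimedBy ∅ f 1 11) := by
            refine noCopy5 hcard11 (hmemcb 1 1 11 (by norm_num) rfl) hd1
              (by rw [← hBA]; exact hmemcb 1 3 11 (by norm_num) rfl) (Or.inr rfl)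
              (by rw [← hB13]; exact hmemcb 1 7 11 (by norm_num) rfl)
              hu1 hce1 hde1 (by omega) (by omega) (by omega)
          have hvuf0 : s(v, u) = f 0 := by rw [h0, Sym2.eq_iff]; omega
          by_cases h9 : f 9 = s(w, u)
          · rw [if_pos h9] at h10'
            have legal10 : LegalMove (f 10) (claimedBy ∅ f 0 10) (claimedBy ∅ f 1 10) := by
              refine legal_of 10 _ h10' ?_ ?_
              · rw [Sym2.mk_isDiag_iff]; omega
              · intro i hi
                interval_cases i
                · rw [h0]; rw [Ne, Sym2.eq_iff]; omega
                · exact ne_of_big_l (hb8 1 (by norm_num)) d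
                · rw [h2']; rw [Ne, Sym2.eq_iff]; omega
                · exact ne_of_big_l (hb8 3 (by norm_num)) d
                · rw [h4']; rw [Ne, Sym2.eq_iff]; omega
                · exact ne_of_big_l (hb8 5 (by norm_num)) d
                · rw [h6']; rw [Ne, Sym2.eq_iff]; omega
                · exact ne_of_big_l (hb8 7 (by norm_num)) d
                · rw [h8']; rw [Ne, Sym2.eq_iff]; omega
                · rw [h9]; rw [Ne, Sym2.eq_iff]; omega
            refine ⟨?_, 11, ?_, hnoc⟩
            · intro n hn
              have hsplit : n = 0 ∨ n = 2 ∨ n = 4 ∨ n = 6 ∨ n = 8 ∨ n = 10 ∨ 12 ≤ n := by omega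
              rcases hsplit with rfl | rfl | rfl | rfl | rfl | rfl | h12
              · exact legal0
              · exact legal2
              · exact legal4
              · exact legal6
              · exact legal8
              · exact legal10
              · exact hfilLeg n (hfil n hn h12)
            · refine copy_of (x0 := v) (x1 := d) (x2 := u) (x3 := w)
                (by omega) (by omega) (by omega) (by omega) (by omega) (by omega)
                ?_ ?_ ?_ ?_ ?_
              · rw [← h4']; exact hmemcb 0 4 11 (by norm_num) rfl
              · rw [hvuf0]; exact hmemcb 0 0 11 (by norm_num) rfl
              · rw [← h8']; exact hmemcb 0 8 11 (by norm_num) rfl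
              · have : s(d, u) = f 6 := by rw [h6']; exact Sym2.eq_swap
                rw [this]; exact hmemcb 0 6 11 (by norm_num) rfl
              · have : s(d, w) = f 10 := by rw [h10']; exact Sym2.eq_swap
                rw [this]; exact hmemcb 0 10 11 (by norm_num) rfl
          · rw [if_neg h9] at h10'
            have legal10 : LegalMove (f 10) (claimedBy ∅ f 0 10) (claimedBy ∅ f 1 10) := by
              refine legal_of 10 _ h10' ?_ ?_
              · rw [Sym2.mk_isDiag_iff]; omega
              · intro i hi
                interval_cases i
                · rw [h0]; rw [Ne, Sym2.eq_iff]; omega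
                · exact ne_of_big_l (hb8 1 (by norm_num)) u
                · rw [h2']; rw [Ne, Sym2.eq_iff]; omega
                · exact ne_of_big_l (hb8 3 (by norm_num)) u
                · rw [h4']; rw [Ne, Sym2.eq_iff]; omega
                · exact ne_of_big_l (hb8 5 (by norm_num)) u
                · rw [h6']; rw [Ne, Sym2.eq_iff]; omega
                · exact ne_of_big_l (hb8 7 (by norm_num)) u
                · rw [h8']; rw [Ne, Sym2.eq_iff]; omega
                · exact h9
            refine ⟨?_, 11, ?_, hnoc⟩
            · intro n hn
              have hsplit : n = 0 ∨ n = 2 ∨ n = 4 ∨ n = 6 ∨ n = 8 ∨ n = 10 ∨ 12 ≤ n := by omega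
              rcases hsplit with rfl | rfl | rfl | rfl | rfl | rfl | h12
              · exact legal0
              · exact legal2
              · exact legal4
              · exact legal6
              · exact legal8
              · exact legal10
              · exact hfilLeg n (hfil n hn h12)
            · refine copy_of (x0 := v) (x1 := u) (x2 := d) (x3 := w)
                (by omega) (by omega) (by omega) (by omega) (by omega) (by omega)
                ?_ ?_ ?_ ?_ ?_
              · rw [hvuf0]; exact hmemcb 0 0 11 (by norm_num) rfl
              · rw [← h4']; exact hmemcb 0 4 11 (by norm_num) rfl
              · rw [← h8']; exact hmemcb 0 8 11 (by norm_num) rfl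
              · rw [← h6']; exact hmemcb 0 6 11 (by norm_num) rfl
              · have : s(u, w) = f 10 := by rw [h10']; exact Sym2.eq_swap
                rw [this]; exact hmemcb 0 10 11 (by norm_num) rfl
        · rw [if_neg hB13] at h8'
          rw [if_neg hB21, if_neg (by tauto)] at h10'
          have legal6 : LegalMove (f 6) (claimedBy ∅ f 0 6) (claimedBy ∅ f 1 6) := by
            refine legal_of 6 _ h6' ?_ ?_
            · rw [Sym2.mk_isDiag_iff]; omega
            · intro i hi
              interval_cases i
              · rw [h0]; rw [Ne, Sym2.eq_iff]; omega
              · exact ne_of_big_r (hb4 1 (by norm_num)) u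
              · rw [h2']; rw [Ne, Sym2.eq_iff]; omega
              · rw [hBA]; rw [Ne, Sym2.eq_iff]; omega
              · rw [h4']; rw [Ne, Sym2.eq_iff]; omega
              · exact hB21
          have legal8 : LegalMove (f 8) (claimedBy ∅ f 0 8) (claimedBy ∅ f 1 8) := by
            refine legal_of 8 _ h8' ?_ ?_
            · rw [Sym2.mk_isDiag_iff]; omega
            · intro i hi
              interval_cases i
              · rw [h0]; rw [Ne, Sym2.eq_iff]; omega
              · exact ne_of_big_r (hb4 1 (by norm_num)) c
              · rw [h2']; rw [Ne, Sym2.eq_iff]; omega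
              · rw [hBA]; rw [Ne, Sym2.eq_iff]; omega
              · rw [h4']; rw [Ne, Sym2.eq_iff]; omega
              · exact hB22
              · rw [h6']; rw [Ne, Sym2.eq_iff]; omega
              · exact hB13
          have legal10 : LegalMove (f 10) (claimedBy ∅ f 0 10) (claimedBy ∅ f 1 10) := by
            refine hfilLeg 10 ?_
            rw [hL10]
            exact h10'
          have hvuf0 : s(v, u) = f 0 := by rw [h0, Sym2.eq_iff]; omega
          refine ⟨?_, 9, ?_, noCopy4 hcard9⟩
          · intro n hn
            have hsplit : n = 0 ∨ n = 2 ∨ n = 4 ∨ n = 6 ∨ n = 8 ∨ n = 10 ∨ 12 ≤ n := by omega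
            rcases hsplit with rfl | rfl | rfl | rfl | rfl | rfl | h12
            · exact legal0
            · exact legal2
            · exact legal4
            · exact legal6
            · exact legal8
            · exact legal10
            · exact hfilLeg n (hfil n hn h12)
          · refine copy_of (x0 := v) (x1 := d) (x2 := u) (x3 := c)
              (by omega) (by omega) (by omega) (by omega) (by omega) (by omega)
              ?_ ?_ ?_ ?_ ?_
            · rw [← h4']; exact hmemcb 0 4 9 (by norm_num) rfl
            · rw [hvuf0]; exact hmemcb 0 0 9 (by norm_num) rfl
            · rw [← h2']; exact hmemcb 0 2 9 (by norm_num) rfl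
            · have : s(d, u) = f 6 := by rw [h6']; exact Sym2.eq_swap
              rw [this]; exact hmemcb 0 6 9 (by norm_num) rfl
            · have : s(d, c) = f 8 := by rw [h8']; exact Sym2.eq_swap
              rw [this]; exact hmemcb 0 8 9 (by norm_num) rfl
  · -- ===================== CASE A =====================
    rw [if_neg hBA] at h4'
    have h6' := hσ 6 rfl
    rw [hL6, strat6_eval, hvof, huof, hc, if_neg hBA] at h6'
    have h8' := hσ 8 rfl
    rw [hL8, strat8_eval, hvof, huof, hc, if_neg hBA] at h8'
    have h10' := hσ 10 rfl
    rw [hL10, strat10_eval, hvof, huof, hc, if_neg hBA] at h10'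
    obtain ⟨t, ht⟩ : ∃ t, fresh [f 0, f 1, f 2, f 3, f 4, f 5] = t := ⟨_, rfl⟩
    rw [ht] at h6' h8'
    have hb6 : ∀ i, i < 6 → ∀ y, y ∈ f i → y < t := by
      intro i hi y hy
      rw [← ht]
      have := hfbL 6 i hi y hy
      rwa [hL6] at this
    have hct : c < t := by
      have : c ∈ f 2 := by rw [h2']; exact Sym2.mem_mk_right _ _
      exact hb6 2 (by norm_num) c this
    have legal4 : LegalMove (f 4) (claimedBy ∅ f 0 4) (claimedBy ∅ f 1 4) := by
      refine legal_of 4 _ h4' ?_ ?_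
      · rw [Sym2.mk_isDiag_iff]; omega
      · intro i hi
        interval_cases i
        · rw [h0]; rw [Ne, Sym2.eq_iff]; omega
        · exact ne_of_big_r (hb2 1 (by norm_num)) u
        · rw [h2']; rw [Ne, Sym2.eq_iff]; omega
        · exact hBA
    have legal6 : LegalMove (f 6) (claimedBy ∅ f 0 6) (claimedBy ∅ f 1 6) := by
      refine legal_of 6 _ h6' ?_ ?_
      · rw [Sym2.mk_isDiag_iff]; omega
      · intro i hi
        interval_cases i
        · rw [h0]; rw [Ne, Sym2.eq_iff]; omega
        · exact ne_of_big_r (hb6 1 (by norm_num)) v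
        · rw [h2']; rw [Ne, Sym2.eq_iff]; omega
        · exact ne_of_big_r (hb6 3 (by norm_num)) v
        · rw [h4']; rw [Ne, Sym2.eq_iff]; omega
        · exact ne_of_big_r (hb6 5 (by norm_num)) v
    have legal10 : LegalMove (f 10) (claimedBy ∅ f 0 10) (claimedBy ∅ f 1 10) := by
      refine hfilLeg 10 ?_
      rw [hL10]
      exact h10'
    have hvuf0 : s(v, u) = f 0 := by rw [h0, Sym2.eq_iff]; omega
    by_cases hA7 : f 7 = s(u, t)
    · rw [if_pos hA7] at h8'
      have legal8 : LegalMove (f 8) (claimedBy ∅ f 0 8) (claimedBy ∅ f 1 8) := by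
        refine legal_of 8 _ h8' ?_ ?_
        · rw [Sym2.mk_isDiag_iff]; omega
        · intro i hi
          interval_cases i
          · rw [h0]; rw [Ne, Sym2.eq_iff]; omega
          · exact ne_of_big_r (hb6 1 (by norm_num)) c
          · rw [h2']; rw [Ne, Sym2.eq_iff]; omega
          · exact ne_of_big_r (hb6 3 (by norm_num)) c
          · rw [h4']; rw [Ne, Sym2.eq_iff]; omega
          · exact ne_of_big_r (hb6 5 (by norm_num)) c
          · rw [h6']; rw [Ne, Sym2.eq_iff]; omega
          · rw [hA7]; rw [Ne, Sym2.eq_iff]; omega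
      refine ⟨?_, 9, ?_, noCopy4 hcard9⟩
      · intro n hn
        have hsplit : n = 0 ∨ n = 2 ∨ n = 4 ∨ n = 6 ∨ n = 8 ∨ n = 10 ∨ 12 ≤ n := by omega
        rcases hsplit with rfl | rfl | rfl | rfl | rfl | rfl | h12
        · exact legal0
        · exact legal2
        · exact legal4
        · exact legal6
        · exact legal8
        · exact legal10
        · exact hfilLeg n (hfil n hn h12)
      · refine copy_of (x0 := v) (x1 := c) (x2 := u) (x3 := t)
          (by omega) (by omega) (by omega) (by omega) (by omega) (by omega)
          ?_ ?_ ?_ ?_ ?_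
        · rw [← h2']; exact hmemcb 0 2 9 (by norm_num) rfl
        · rw [hvuf0]; exact hmemcb 0 0 9 (by norm_num) rfl
        · rw [← h6']; exact hmemcb 0 6 9 (by norm_num) rfl
        · have : s(c, u) = f 4 := by rw [h4']; exact Sym2.eq_swap
          rw [this]; exact hmemcb 0 4 9 (by norm_num) rfl
        · rw [← h8']; exact hmemcb 0 8 9 (by norm_num) rfl
    · rw [if_neg hA7] at h8'
      have legal8 : LegalMove (f 8) (claimedBy ∅ f 0 8) (claimedBy ∅ f 1 8) := by
        refine legal_of 8 _ h8' ?_ ?_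
        · rw [Sym2.mk_isDiag_iff]; omega
        · intro i hi
          interval_cases i
          · rw [h0]; rw [Ne, Sym2.eq_iff]; omega
          · exact ne_of_big_r (hb6 1 (by norm_num)) u
          · rw [h2']; rw [Ne, Sym2.eq_iff]; omega
          · exact ne_of_big_r (hb6 3 (by norm_num)) u
          · rw [h4']; rw [Ne, Sym2.eq_iff]; omega
          · exact ne_of_big_r (hb6 5 (by norm_num)) u
          · rw [h6']; rw [Ne, Sym2.eq_iff]; omega
          · exact hA7
      refine ⟨?_, 9, ?_, noCopy4 hcard9⟩
      · intro n hn
        have hsplit : n = 0 ∨ n = 2 ∨ n = 4 ∨ n = 6 ∨ n = 8 ∨ n = 10 ∨ 12 ≤ n := by omega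
        rcases hsplit with rfl | rfl | rfl | rfl | rfl | rfl | h12
        · exact legal0
        · exact legal2
        · exact legal4
        · exact legal6
        · exact legal8
        · exact legal10
        · exact hfilLeg n (hfil n hn h12)
      · refine copy_of (x0 := v) (x1 := u) (x2 := c) (x3 := t)
          (by omega) (by omega) (by omega) (by omega) (by omega) (by omega)
          ?_ ?_ ?_ ?_ ?_
        · rw [hvuf0]; exact hmemcb 0 0 9 (by norm_num) rfl
        · rw [← h2']; exact hmemcb 0 2 9 (by norm_num) rfl
        · rw [← h6']; exact hmemcb 0 6 9 (by norm_num) rfl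
        · rw [← h4']; exact hmemcb 0 4 9 (by norm_num) rfl
        · rw [← h8']; exact hmemcb 0 8 9 (by norm_num) rfl
end

section
/- Let G1 and G2 be graphs on a common vertex set, each isomorphic to K̂_{2,2}, let x be a main vertex (i.e., a vertex of degree 3) of G1 and y a main vertex of G2 with x ≠ y, and suppose that the edge xy belongs neither to G1 nor to G2. Then the union of the edge sets of G1 and G2 has at least 8 edges. -/
open SimpleGraph

/-- The graph `H` (on an ambient vertex set `V`) is a copy of the graph `G`:
there is an injection `φ` of the vertices of `G` into `V` such that the edges
of `H` are exactly the images under `φ` of the edges of `G` (so `H` is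
isomorphic to `G`, all vertices of `V` outside the range of `φ` being
isolated in `H`). -/
def IsCopyOf {V : Type*} {α : Type*} (H : SimpleGraph V) (G : SimpleGraph α) : Prop :=
  ∃ φ : α → V, Function.Injective φ ∧
    ∀ u v : V, H.Adj u v ↔ ∃ a b : α, G.Adj a b ∧ u = φ a ∧ v = φ b

instance : DecidableRel (hatK 2).Adj := fun a b => by
  unfold hatK; rw [SimpleGraph.fromRel_adj]; infer_instance

lemma copy_struct_s7 {V : Type*} (G : SimpleGraph V) (hG : IsCopyOf G (hatK 2))
    (x : V) (hx : (G.neighborSet x).ncard = 3) :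
    G.edgeSet.Finite ∧ G.edgeSet.ncard = 5 ∧
    ∃ x' : V, G.Adj x x' ∧
      (∀ u v : V, G.Adj u v → u = x ∨ u = x' ∨ v = x ∨ v = x') ∧
      (∀ w : V, G.Adj x' w → w ≠ x → G.Adj x w) ∧
      (G.neighborSet x').ncard = 3 ∧ (G.neighborSet x').Finite := by
  obtain ⟨φ, hinj, hadj⟩ := hG
  have key : ∀ a b : Fin 4, G.Adj (φ a) (φ b) ↔ (hatK 2).Adj a b := by
    intro a b
    constructor
    · intro h
      obtain ⟨a', b', hab, ha, hb⟩ := (hadj _ _).1 h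
      rwa [hinj ha, hinj hb]
    · intro h
      exact (hadj _ _).2 ⟨a, b, h, rfl, rfl⟩
  have hE : G.edgeSet = Sym2.map φ '' (hatK 2).edgeSet := by
    ext e
    induction e with
    | h u v =>
      simp only [SimpleGraph.mem_edgeSet]
      constructor
      · intro h
        obtain ⟨a, b, hab, ha, hb⟩ := (hadj _ _).1 h
        exact ⟨s(a, b), hab, by simp [ha, hb]⟩
      · rintro ⟨e', he', heq⟩
        induction e' with
        | h a b =>
          simp only [Sym2.map_pair_eq, Sym2.eq, Sym2.rel_iff'] at heq
          rcases heq with ⟨rfl, rfl⟩ | ⟨rfl, rfl⟩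
          · exact (key a b).2 he'
          · exact ((key a b).2 he').symm
  have hEfin : G.edgeSet.Finite := by
    rw [hE]; exact ((hatK 2).edgeSet.toFinite).image _
  have hEcard : G.edgeSet.ncard = 5 := by
    rw [hE, Set.ncard_image_of_injective _ (Sym2.map.injective hinj),
      ← SimpleGraph.coe_edgeFinset, Set.ncard_coe_finset]
    decide
  have hNtrans : ∀ a : Fin 4, G.neighborSet (φ a) = φ '' (hatK 2).neighborSet a := by
    intro a
    ext v
    simp only [SimpleGraph.mem_neighborSet, Set.mem_image]
    constructor
    · intro h
      obtain ⟨a', b, hab, ha, hb⟩ := (hadj _ _).1 h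
      exact ⟨b, by rw [hinj ha]; exact hab, hb.symm⟩
    · rintro ⟨b, hb, rfl⟩
      exact (key a b).2 hb
  have hxmem : ∃ a : Fin 4, x = φ a := by
    have hne : (G.neighborSet x).Nonempty := by
      apply Set.nonempty_of_ncard_ne_zero; omega
    obtain ⟨w, hw⟩ := hne
    obtain ⟨a, b, hab, ha, hb⟩ := (hadj _ _).1 hw
    exact ⟨a, ha⟩
  obtain ⟨a, rfl⟩ := hxmem
  have hdeg : ((hatK 2).neighborSet a).ncard = 3 := by
    rwa [hNtrans, Set.ncard_image_of_injective _ hinj] at hx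
  have hdeg' : ((hatK 2).neighborFinset a).card = 3 := by
    rwa [← Set.ncard_coe_finset, SimpleGraph.neighborFinset_def, Set.coe_toFinset]
  have ha01 : a = 0 ∨ a = 1 := by
    have hall : ∀ b : Fin 4, ((hatK 2).neighborFinset b).card = 3 → b = 0 ∨ b = 1 := by decide
    exact hall a hdeg'
  set a' : Fin 4 := if a = 0 then 1 else 0 with ha'
  have hfacts : (hatK 2).Adj a a' ∧
      (∀ u v : Fin 4, (hatK 2).Adj u v → u = a ∨ u = a' ∨ v = a ∨ v = a') ∧
      (∀ w : Fin 4, (hatK 2).Adj a' w → w ≠ a → (hatK 2).Adj a w) ∧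
      ((hatK 2).neighborFinset a').card = 3 := by
    rcases ha01 with rfl | rfl <;> simp only [ha'] <;> decide
  obtain ⟨hf1, hf2, hf3, hf4⟩ := hfacts
  refine ⟨hEfin, hEcard, φ a', (key a a').2 hf1, ?_, ?_, ?_, ?_⟩
  · intro u v huv
    obtain ⟨c, d, hcd, rfl, rfl⟩ := (hadj _ _).1 huv
    rcases hf2 c d hcd with rfl | rfl | rfl | rfl
    · exact Or.inl rfl
    · exact Or.inr (Or.inl rfl)
    · exact Or.inr (Or.inr (Or.inl rfl))
    · exact Or.inr (Or.inr (Or.inr rfl))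
  · intro w hw hwx
    obtain ⟨c, d, hcd, hc, rfl⟩ := (hadj _ _).1 hw
    rw [← hinj hc] at hcd
    exact (key a d).2 (hf3 d hcd fun h => hwx (by rw [h]))
  · rw [hNtrans, Set.ncard_image_of_injective _ hinj, Set.ncard_eq_toFinset_card',
      ← SimpleGraph.neighborFinset_def]
    exact hf4
  · rw [hNtrans]; exact (Set.toFinite _).image _


/-- If `G1` and `G2` are graphs on a common vertex set, each a copy of
`K̂_{2,2}`, `x` is a main vertex (a vertex of degree 3) of `G1`, `y` is a main
vertex of `G2`, `x ≠ y`, and the edge `xy` belongs neither to `G1` nor to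
`G2`, then the union of the edge sets of `G1` and `G2` has at least 8 edges. -/
theorem union_of_two_hatK22_copies {V : Type*} (G1 G2 : SimpleGraph V)
    (h1 : IsCopyOf G1 (hatK 2)) (h2 : IsCopyOf G2 (hatK 2))
    (x y : V) (hxy : x ≠ y)
    (hx : (G1.neighborSet x).ncard = 3) (hy : (G2.neighborSet y).ncard = 3)
    (hxy1 : ¬ G1.Adj x y) (hxy2 : ¬ G2.Adj x y) :
    8 ≤ (G1.edgeSet ∪ G2.edgeSet).ncard := by
  obtain ⟨hfin1, hcard1, x', hxx', hcov1, hstep1, hx'3, hx'fin⟩ := copy_struct_s7 G1 h1 x hx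
  obtain ⟨hfin2, hcard2, y', hyy', hcov2, hstep2, _, _⟩ := copy_struct_s7 G2 h2 y hy
  -- x has no neighbors in G2
  have hxG2 : ∀ w, ¬ G2.Adj x w := by
    intro w hw
    rcases hcov2 x w hw with h | h | h | h
    · exact hxy h
    · rw [← h] at hyy'; exact hxy2 hyy'.symm
    · rw [h] at hw; exact hxy2 hw
    · rw [h] at hw; exact hxy2 (hstep2 x hw.symm hxy).symm
  -- y has no neighbors in G1
  have hyG1 : ∀ w, ¬ G1.Adj y w := by
    intro w hw
    rcases hcov1 y w hw with h | h | h | h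
    · exact hxy h.symm
    · rw [← h] at hxx'; exact hxy1 hxx'
    · rw [h] at hw; exact hxy1 hw.symm
    · rw [h] at hw; exact hxy1 (hstep1 y hw.symm (Ne.symm hxy))
  have hsub : G1.edgeSet ∩ G2.edgeSet ⊆
      (fun w => s(x', w)) '' (G1.neighborSet x' \ {x, y}) := by
    intro e he
    obtain ⟨he1, he2⟩ := he
    induction e with
    | h u v =>
      rw [SimpleGraph.mem_edgeSet] at he1 he2
      have main : ∀ p q : V, G1.Adj p q → G2.Adj p q → p = x' →
          s(p, q) ∈ (fun w => s(x', w)) '' (G1.neighborSet x' \ {x, y}) := by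
        rintro p q h1' h2' rfl
        refine ⟨q, ⟨h1', ?_⟩, rfl⟩
        simp only [Set.mem_insert_iff, Set.mem_singleton_iff, not_or]
        exact ⟨fun h => hxG2 p (h ▸ h2').symm, fun h => hyG1 p (h ▸ h1').symm⟩
      rcases hcov1 u v he1 with h | h | h | h
      · exact absurd (h ▸ he2) (hxG2 v)
      · exact main u v he1 he2 h
      · exact absurd (h ▸ he2.symm) (hxG2 u)
      · rw [Sym2.eq_swap]; exact main v u he1.symm he2.symm h
  have hN2 : (G1.neighborSet x' \ {x, y}).ncard ≤ 2 := by
    have h1' : G1.neighborSet x' \ {x, y} ⊆ G1.neighborSet x' \ {x} := by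
      intro w hw
      exact ⟨hw.1, fun h => hw.2 (Or.inl h)⟩
    calc (G1.neighborSet x' \ {x, y}).ncard
        ≤ (G1.neighborSet x' \ {x}).ncard := Set.ncard_le_ncard h1' (hx'fin.diff)
      _ = (G1.neighborSet x').ncard - 1 :=
          Set.ncard_diff_singleton_of_mem hxx'.symm
      _ ≤ 2 := by omega
  have hI : (G1.edgeSet ∩ G2.edgeSet).ncard ≤ 2 := by
    calc (G1.edgeSet ∩ G2.edgeSet).ncard
        ≤ ((fun w => s(x', w)) '' (G1.neighborSet x' \ {x, y})).ncard :=
          Set.ncard_le_ncard hsub (((hx'fin.diff).image _))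
      _ ≤ (G1.neighborSet x' \ {x, y}).ncard := Set.ncard_image_le (hx'fin.diff)
      _ ≤ 2 := hN2
  have hunion := Set.ncard_union_add_ncard_inter G1.edgeSet G2.edgeSet hfin1 hfin2
  omega
end
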